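/- arXiv:1206.5473 — 6 statements merged into one kernel-verified Lean document; each statement's English description precedes it below -/
import Mathlib

section
/- Let H be a group that is not strongly bounded, witnessed as follows: there exists a strictly increasing sequence (X_n)_{n∈ℕ} of proper subsets of H with {1} ∪ X_n⁻¹ ∪ X_n·X_n ⊆ X_{n+1} for every n and H = ⋃_{n∈ℕ} X_n. Then for every infinite subgroup G ≤ H there exists a subgroup K with G ≤ K ≤ H, |K| = |G|, and K is not strongly bounded, i.e. K also admits a strictly increasing sequence (Y_n)_{n∈ℕ} of proper subsets with {1} ∪ Y_n⁻¹ ∪ Y_n·Y_n ⊆ Y_{n+1} for every n and K = ⋃_{n∈ℕ} Y_n. -/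
open Pointwise

/-- A witness that a group `G` is *not* strongly bounded (via de Cornulier's
characterization): a strictly increasing sequence of proper subsets covering `G`,
each step closed under `{1}`, inverses and products into the next set. -/
def NotStronglyBoundedWitness (G : Type*) [Group G] : Prop :=
  ∃ X : ℕ → Set G, StrictMono X ∧ (∀ n, X n ≠ Set.univ) ∧
    (∀ n, ({1} : Set G) ∪ (X n)⁻¹ ∪ X n * X n ⊆ X (n + 1)) ∧
    (⋃ n, X n) = Set.univ

lemma mk_subgroup_closure_le {H : Type*} [Group H] (s : Set H) [Nonempty s] :
    Cardinal.mk (Subgroup.closure s) ≤ max (Cardinal.mk s) Cardinal.aleph0 := by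
  have hr : (FreeGroup.lift (Subtype.val : s → H)).range = Subgroup.closure s := by
    rw [FreeGroup.range_lift_eq_closure, Subtype.range_coe]
  calc Cardinal.mk (Subgroup.closure s)
      = Cardinal.mk (FreeGroup.lift (Subtype.val : s → H)).range := by rw [hr]
    _ ≤ Cardinal.mk (FreeGroup s) :=
        Cardinal.mk_le_of_surjective (FreeGroup.lift (Subtype.val : s → H)).rangeRestrict_surjective
    _ = max (Cardinal.mk s) Cardinal.aleph0 := Cardinal.mk_freeGroup (α := s)

/-- The complement of the class of strongly bounded groups is bountiful. -/
theorem not_strongly_bounded_bountiful {H : Type*} [Group H]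
    (hH : NotStronglyBoundedWitness H) :
    ∀ G : Subgroup H, Infinite G →
      ∃ K : Subgroup H, G ≤ K ∧ Cardinal.mk K = Cardinal.mk G ∧
        NotStronglyBoundedWitness K := by
  intro G hG
  obtain ⟨X, hX1, hX2, hX3, hX4⟩ := hH
  -- pick h n ∉ X n
  have hh : ∀ n, ∃ x : H, x ∉ X n := fun n => (Set.ne_univ_iff_exists_notMem _).mp (hX2 n)
  choose h hhX using hh
  set S : Set H := (G : Set H) ∪ Set.range h with hS
  have hSne : S.Nonempty := ⟨1, Or.inl G.one_mem⟩
  haveI : Nonempty S := hSne.to_subtype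
  set K : Subgroup H := Subgroup.closure S with hK
  have hGK : G ≤ K := by
    calc G = Subgroup.closure (G : Set H) := (Subgroup.closure_eq G).symm
      _ ≤ K := Subgroup.closure_mono Set.subset_union_left
  have hhK : ∀ n, h n ∈ K := fun n => Subgroup.subset_closure (Or.inr ⟨n, rfl⟩)
  have haleph : Cardinal.aleph0 ≤ Cardinal.mk G := Cardinal.aleph0_le_mk G
  -- cardinality
  have hcard : Cardinal.mk K = Cardinal.mk G := by
    refine le_antisymm ?_ (Cardinal.mk_le_mk_of_subset hGK)
    refine (mk_subgroup_closure_le S).trans ?_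
    have h1 : Cardinal.mk S ≤ Cardinal.mk G := by
      refine (Cardinal.mk_union_le _ _).trans ?_
      have h2 : Cardinal.mk (Set.range h) ≤ Cardinal.aleph0 := by
        haveI := (Set.countable_range h).to_subtype
        exact Cardinal.mk_le_aleph0
      calc Cardinal.mk (G : Set H) + Cardinal.mk (Set.range h)
          ≤ Cardinal.mk G + Cardinal.aleph0 := by
            exact add_le_add le_rfl h2
        _ = Cardinal.mk G := Cardinal.add_eq_left haleph haleph
    exact max_le h1 haleph
  -- build strictly increasing index sequence g
  have hcover : ∀ x : H, ∃ m, x ∈ X m := by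
    intro x
    have : x ∈ ⋃ n, X n := hX4 ▸ Set.mem_univ x
    exact Set.mem_iUnion.mp this
  choose f hf using hcover
  let g : ℕ → ℕ := fun n => Nat.rec 0 (fun _ k => max (f (h k)) k + 1) n
  have hgsucc : ∀ n, g (n + 1) = max (f (h (g n))) (g n) + 1 := fun n => rfl
  have hglt : ∀ n, g n < g (n + 1) := by
    intro n; rw [hgsucc]; exact Nat.lt_succ_of_le (le_max_right _ _)
  have hgmono : StrictMono g := strictMono_nat_of_lt_succ hglt
  have hXmono : Monotone X := hX1.monotone
  have hhin : ∀ n, h (g n) ∈ X (g (n + 1)) := by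
    intro n
    exact hXmono (by rw [hgsucc]; exact (le_max_left _ _).trans (Nat.le_succ _)) (hf (h (g n)))
  -- the witness on K
  refine ⟨K, hGK, hcard, ?_⟩
  refine ⟨fun n => (Subtype.val : K → H) ⁻¹' X (g n), ?_, ?_, ?_, ?_⟩
  · refine strictMono_nat_of_lt_succ fun n => ?_
    constructor
    · exact fun y hy => hXmono (hgmono (Nat.lt_succ_self n)).le hy
    · intro hsub
      exact hhX (g n) (hsub (show (⟨h (g n), hhK (g n)⟩ : K) ∈ _ from hhin n))
  · intro n hcon
    exact hhX (g n) (Set.eq_univ_iff_forall.mp hcon ⟨h (g n), hhK (g n)⟩)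
  · intro n y hy
    have hstep : X (g n + 1) ⊆ X (g (n + 1)) := by
      refine hXmono ?_
      rw [hgsucc]; exact Nat.succ_le_succ (le_max_right _ _)
    refine hstep ?_
    rcases hy with (hy | hy) | hy
    · refine hX3 (g n) (Or.inl (Or.inl ?_))
      simp only [Set.mem_singleton_iff] at hy ⊢
      rw [hy]; rfl
    · refine hX3 (g n) (Or.inl (Or.inr ?_))
      exact hy
    · rw [Set.mem_mul] at hy
      obtain ⟨a, ha, b, hb, rfl⟩ := hy
      exact hX3 (g n) (Or.inr ⟨↑a, ha, ↑b, hb, rfl⟩)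
  · ext k
    simp only [Set.mem_iUnion, Set.mem_univ, iff_true]
    exact ⟨f k.val, hXmono hgmono.le_apply (hf k.val)⟩
end

section
/- Let H be a group of cofinality ≤ ω, i.e. H is the union of a strictly increasing sequence (H_n)_{n∈ℕ} of proper subgroups. Then for every infinite subgroup G ≤ H there exists a subgroup K with G ≤ K ≤ H, |K| = |G|, and K is of cofinality ≤ ω, i.e. K is the union of a strictly increasing sequence of proper subgroups of K. -/
/-!
Pick `xₙ ∈ Hₙ₊₁ \ Hₙ` for every `n` and let `K` be generated by `G` and the `xₙ`.
Since `G` is infinite and only countably many generators were added, `|K| = |G|`; and the traces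
`Hₙ ∩ K` still cover `K` and increase strictly, each step being witnessed by `xₙ`.
-/

/-- A group has cofinality `≤ ω` if it is the union of a strictly increasing
sequence of proper subgroups. -/
def CofinalityLeOmega (G : Type*) [Group G] : Prop :=
  ∃ Hn : ℕ → Subgroup G, StrictMono Hn ∧ (∀ n, Hn n ≠ ⊤) ∧
    ∀ x : G, ∃ n, x ∈ Hn n

open Cardinal

theorem Subgroup.cardinalMk_closure {H : Type*} [Group H] (s : Set H) [Infinite s] :
    #(closure s) = #s := by
  refine le_antisymm ?_ (mk_le_mk_of_subset subset_closure)
  calc #(closure s) = #(FreeGroup.lift ((↑) : s → H)).range := by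
        rw [FreeGroup.closure_eq_range]
    _ ≤ #(FreeGroup s) := mk_le_of_surjective (MonoidHom.rangeRestrict_surjective _)
    _ = #s := by rw [mk_freeGroup, max_eq_left (aleph0_le_mk s)]

theorem Cardinal.mk_union_eq_left_of_countable {α : Type*} {s t : Set α} [Infinite s]
    (ht : t.Countable) : #(s ∪ t : Set α) = #s := by
  refine le_antisymm ?_ (mk_le_mk_of_subset Set.subset_union_left)
  calc #(s ∪ t : Set α) ≤ #s + #t := mk_union_le s t
    _ ≤ #s + ℵ₀ := add_le_add_right ht.le_aleph0 _
    _ = #s := add_eq_left (aleph0_le_mk s) (aleph0_le_mk s)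

theorem CofinalityLeOmega.of_strictMono {G : Type*} [Group G] {Hn : ℕ → Subgroup G}
    (hmono : StrictMono Hn) (hcover : ∀ x, ∃ n, x ∈ Hn n) : CofinalityLeOmega G :=
  ⟨Hn, hmono, fun n => ((hmono n.lt_succ_self).trans_le le_top).ne, hcover⟩

theorem CofinalityLeOmega.subgroup_of_forall_exists_mem_diff {H : Type*} [Group H]
    {Hn : ℕ → Subgroup H} (hmono : Monotone Hn) (hcover : ∀ x, ∃ n, x ∈ Hn n)
    {K : Subgroup H} (hK : ∀ n, ∃ x ∈ K, x ∈ Hn (n + 1) ∧ x ∉ Hn n) :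
    CofinalityLeOmega K := by
  refine .of_strictMono (Hn := fun n => (Hn n).subgroupOf K) (strictMono_nat_of_lt_succ ?_) ?_
  · intro n
    obtain ⟨x, hxK, hx_succ, hx_not⟩ := hK n
    refine SetLike.lt_iff_le_and_exists.mpr ⟨Subgroup.subgroupOf_mono K (hmono n.le_succ), ?_⟩
    exact ⟨⟨x, hxK⟩, Subgroup.mem_subgroupOf.mpr hx_succ, mt Subgroup.mem_subgroupOf.mp hx_not⟩
  · intro k
    obtain ⟨n, hn⟩ := hcover k
    exact ⟨n, Subgroup.mem_subgroupOf.mpr hn⟩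

/-- The class of groups of cofinality `≤ ω` is bountiful. -/
theorem cofinality_le_omega_bountiful {H : Type*} [Group H]
    (hH : CofinalityLeOmega H) :
    ∀ G : Subgroup H, Infinite G →
      ∃ K : Subgroup H, G ≤ K ∧ Cardinal.mk K = Cardinal.mk G ∧
        CofinalityLeOmega K := by
  intro G hG
  obtain ⟨Hn, hmono, -, hcover⟩ := hH
  choose x hx_succ hx_not using fun n : ℕ => SetLike.exists_of_lt (hmono n.lt_succ_self)
  have : Infinite (G ∪ Set.range x : Set H) :=
    (Set.infinite_coe_iff.mp hG).mono Set.subset_union_left |>.to_subtype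
  refine ⟨Subgroup.closure (G ∪ Set.range x), fun g hg => Subgroup.subset_closure (.inl hg), ?_, ?_⟩
  · rw [Subgroup.cardinalMk_closure, mk_union_eq_left_of_countable (Set.countable_range x)]
    rfl
  · refine .subgroup_of_forall_exists_mem_diff hmono.monotone hcover fun n => ?_
    exact ⟨x n, Subgroup.subset_closure (.inr ⟨n, rfl⟩), hx_succ n, hx_not n⟩
end

section
/- Let H be a group that splits as a non-trivial free product with amalgamation. Then for every infinite subgroup G ≤ H there exists a subgroup K with G ≤ K ≤ H, |K| = |G|, and K splits as a non-trivial free product with amalgamation. -/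
/-- A group `G` splits as a non-trivial free product with amalgamation:
there are subgroups `A`, `B` with `C = A ⊓ B` proper in both, `A ∪ B`
generates `G`, and every nonempty alternating product of elements taken
alternately from `A ∖ C` and `B ∖ C` is different from the identity. -/
def SplitsAsNontrivialAmalgam (G : Type*) [Group G] : Prop :=
  ∃ A B : Subgroup G,
    A ⊓ B ≠ A ∧ A ⊓ B ≠ B ∧
    Subgroup.closure ((A : Set G) ∪ (B : Set G)) = ⊤ ∧
    ∀ w : List G, w ≠ [] →
      (∀ x ∈ w, (x ∈ A ∧ x ∉ B) ∨ (x ∈ B ∧ x ∉ A)) →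
      w.Chain' (fun x y => ¬(x ∈ A ∧ y ∈ A) ∧ ¬(x ∈ B ∧ y ∈ B)) →
      w.prod ≠ 1

/-!
If `A` and `B` witness the splitting of `H`, then for any set `s ⊆ A ∪ B` the subgroup
`K = ⟨s⟩` is generated by `K ⊓ A` and `K ⊓ B`, and a reduced alternating word in these two
subgroups is also reduced for `A` and `B`; so `K` splits as soon as `s` contains some
`a ∈ A ∖ B` and some `b ∈ B ∖ A`. Each element of `G` is a product of finitely many elements
of `A ∪ B`, so `|G|` such elements, together with `a` and `b`, generate a subgroup `K ≥ G`
of cardinality `|G|`.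
-/

open Cardinal

namespace Subgroup

variable {G : Type*} [Group G]

theorem exists_finite_subset_of_mem_closure {s : Set G} {x : G}
    (hx : x ∈ closure s) : ∃ t ⊆ s, t.Finite ∧ x ∈ closure t := by
  induction hx using closure_induction with
  | mem y hy =>
    exact ⟨{y}, Set.singleton_subset_iff.2 hy, Set.finite_singleton y, subset_closure rfl⟩
  | one => exact ⟨∅, Set.empty_subset s, Set.finite_empty, one_mem _⟩
  | mul y z _ _ ihy ihz =>
    obtain ⟨t, hts, htf, hyt⟩ := ihy
    obtain ⟨u, hus, huf, hzu⟩ := ihz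
    exact ⟨t ∪ u, Set.union_subset hts hus, htf.union huf,
      mul_mem (closure_mono Set.subset_union_left hyt)
        (closure_mono Set.subset_union_right hzu)⟩
  | inv y _ ih =>
    obtain ⟨t, hts, htf, hyt⟩ := ih
    exact ⟨t, hts, htf, inv_mem hyt⟩

theorem exists_subset_cardinalMk_le_of_le_closure {s : Set G} {K : Subgroup G}
    (hK : K ≤ closure s) :
    ∃ t ⊆ s, #t ≤ max #K ℵ₀ ∧ K ≤ closure t := by
  choose t hts htf hxt using fun x : K => exists_finite_subset_of_mem_closure (hK x.2)
  refine ⟨⋃ x, t x, Set.iUnion_subset hts, ?_, fun x hx =>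
    closure_mono (Set.subset_iUnion t ⟨x, hx⟩) (hxt ⟨x, hx⟩)⟩
  calc #(⋃ x, t x) ≤ #K * ⨆ x, #(t x) := mk_iUnion_le t
    _ ≤ #K * ℵ₀ := by
      gcongr
      exact ciSup_le' fun x => (lt_aleph0_iff_set_finite.2 (htf x)).le
    _ ≤ max #K ℵ₀ := mul_le_max_of_aleph0_le_right le_rfl

theorem cardinalMk_closure_le_max (s : Set G) :
    #(closure s) ≤ max #s ℵ₀ := by
  rw [FreeGroup.closure_eq_range]
  refine mk_range_le.trans ?_
  rcases isEmpty_or_nonempty s with _ | _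
  · exact mk_le_aleph0.trans (le_max_right _ _)
  · exact (mk_freeGroup s).le

end Subgroup

section

variable {G : Type*} [Group G]

def AlternatingProdsNeOne (A B : Subgroup G) : Prop :=
  ∀ w : List G, w ≠ [] →
    (∀ x ∈ w, (x ∈ A ∧ x ∉ B) ∨ (x ∈ B ∧ x ∉ A)) →
    w.IsChain (fun x y => ¬(x ∈ A ∧ y ∈ A) ∧ ¬(x ∈ B ∧ y ∈ B)) →
    w.prod ≠ 1

theorem AlternatingProdsNeOne.comap {K : Type*} [Group K] {A B : Subgroup G}
    (h : AlternatingProdsNeOne A B) (f : K →* G) :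
    AlternatingProdsNeOne (A.comap f) (B.comap f) := by
  intro w hw hletters hchain hprod
  refine h (w.map f) (by simpa using hw) (by simpa using hletters)
    ((List.isChain_map f).2 hchain) ?_
  rw [← map_list_prod, hprod, map_one]

theorem splitsAsNontrivialAmalgam_closure {A B : Subgroup G} (h : AlternatingProdsNeOne A B)
    {s : Set G} (hs : s ⊆ A ∪ B) {a b : G} (ha : a ∈ s) (haB : a ∉ B) (hb : b ∈ s)
    (hbA : b ∉ A) : SplitsAsNontrivialAmalgam (Subgroup.closure s) := by
  set K := Subgroup.closure s
  have not_le : ∀ {x : G} {C D : Subgroup G}, x ∈ s → x ∉ D → s ⊆ C ∪ D →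
      ¬ C.subgroupOf K ≤ D.subgroupOf K :=
    fun hx hxD hCD hle =>
      hxD (hle (x := ⟨_, Subgroup.subset_closure hx⟩) ((hCD hx).resolve_right hxD))
  refine ⟨A.subgroupOf K, B.subgroupOf K, mt inf_eq_left.1 (not_le ha haB hs),
    mt inf_eq_right.1 (not_le hb hbA (hs.trans (Set.union_comm _ _).subset)), ?_,
    h.comap K.subtype⟩
  exact top_le_iff.1 (Subgroup.closure_closure_coe_preimage.ge.trans
    (Subgroup.closure_mono fun x hx => hs hx))

end

/-- The class of groups splitting as non-trivial free products with
amalgamation is bountiful. -/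
theorem amalgam_bountiful {H : Type*} [Group H]
    (hH : SplitsAsNontrivialAmalgam H) :
    ∀ G : Subgroup H, Infinite G →
      ∃ K : Subgroup H, G ≤ K ∧ Cardinal.mk K = Cardinal.mk G ∧
        SplitsAsNontrivialAmalgam K := by
  intro G _
  obtain ⟨A, B, hAB, hBA, hgen, hword⟩ := hH
  obtain ⟨a, haA, haB⟩ := SetLike.not_le_iff_exists.1 (mt inf_eq_left.2 hAB)
  obtain ⟨b, hbB, hbA⟩ := SetLike.not_le_iff_exists.1 (mt inf_eq_right.2 hBA)
  obtain ⟨s, hsAB, hsG, hGs⟩ :=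
    Subgroup.exists_subset_cardinalMk_le_of_le_closure (le_top.trans hgen.ge : G ≤ _)
  have hκ : ℵ₀ ≤ #G := aleph0_le_mk G
  have card_insert_le : ∀ (x : H) {t : Set H}, #t ≤ #G → #(insert x t : Set H) ≤ #G :=
    fun x t ht => mk_insert_le.trans (add_le_of_le hκ ht (one_le_aleph0.trans hκ))
  set t : Set H := insert a (insert b s)
  have hst : s ⊆ t := (Set.subset_insert b s).trans (Set.subset_insert a _)
  have htAB : t ⊆ A ∪ B :=
    Set.insert_subset (Or.inl haA) (Set.insert_subset (Or.inr hbB) hsAB)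
  have htG : #t ≤ #G := card_insert_le a (card_insert_le b (hsG.trans_eq (max_eq_left hκ)))
  have hGt : G ≤ Subgroup.closure t := hGs.trans (Subgroup.closure_mono hst)
  refine ⟨Subgroup.closure t, hGt, ?_, splitsAsNontrivialAmalgam_closure hword htAB
    (Set.mem_insert a _) haB (Set.mem_insert_of_mem a (Set.mem_insert b s)) hbA⟩
  exact le_antisymm ((Subgroup.cardinalMk_closure_le_max t).trans (max_le htG hκ))
    (mk_le_of_injective (Subgroup.inclusion_injective hGt))
end

section
/- Let H be a group admitting a surjective group homomorphism onto the additive group of integers ℤ. Then for every infinite subgroup G ≤ H there exists a subgroup K with G ≤ K ≤ H, |K| = |G|, and K admits a surjective group homomorphism onto ℤ. -/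
/-- A group admits a surjective group homomorphism onto the additive group `ℤ`. -/
def SurjectsOntoZ (G : Type*) [Group G] : Prop :=
  ∃ f : G →* Multiplicative ℤ, Function.Surjective f

lemma mk_closure_le_max {H : Type*} [Group H] (S : Set H) :
    Cardinal.mk (Subgroup.closure S) ≤ max (Cardinal.mk S) Cardinal.aleph0 := by
  have h1 : (FreeGroup.lift (Subtype.val : S → H)).range = Subgroup.closure S := by
    rw [FreeGroup.range_lift_eq_closure, Subtype.range_coe]
  have h2 : Cardinal.mk (Subgroup.closure S) ≤ Cardinal.mk (FreeGroup S) := by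
    rw [← h1]
    exact Cardinal.mk_le_of_surjective
      (MonoidHom.rangeRestrict_surjective (FreeGroup.lift (Subtype.val : S → H)))
  refine h2.trans ?_
  rcases isEmpty_or_nonempty S with hS | hS
  · simp [Cardinal.mk_le_aleph0]
  · rw [Cardinal.mk_freeGroup]

/-- The class of groups having homomorphisms onto `ℤ` is bountiful. -/
theorem surjects_onto_Z_bountiful {H : Type*} [Group H]
    (hH : SurjectsOntoZ H) :
    ∀ G : Subgroup H, Infinite G →
      ∃ K : Subgroup H, G ≤ K ∧ Cardinal.mk K = Cardinal.mk G ∧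
        SurjectsOntoZ K := by
  intro G hG
  obtain ⟨f, hf⟩ := hH
  obtain ⟨h, hh⟩ := hf (Multiplicative.ofAdd 1)
  set S : Set H := ↑G ∪ {h} with hS
  refine ⟨Subgroup.closure S, ?_, ?_, ?_⟩
  · rw [← Subgroup.closure_eq G]
    exact Subgroup.closure_mono Set.subset_union_left
  · apply le_antisymm
    · refine (mk_closure_le_max S).trans ?_
      have hω : Cardinal.aleph0 ≤ Cardinal.mk G := Cardinal.aleph0_le_mk G
      have : Cardinal.mk S ≤ Cardinal.mk (↑G : Set H) + 1 := by
        refine (Cardinal.mk_union_le _ _).trans ?_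
        simp
      rw [max_le_iff]
      constructor
      · refine this.trans ?_
        have : Cardinal.mk (↑G : Set H) = Cardinal.mk G := rfl
        rw [this]
        exact (Cardinal.add_one_of_aleph0_le hω).le
      · exact hω
    · exact Cardinal.mk_le_mk_of_subset
        (Set.subset_union_left.trans Subgroup.subset_closure)
  · refine ⟨f.comp (Subgroup.closure S).subtype, ?_⟩
    intro m
    have hhK : h ∈ Subgroup.closure S :=
      Subgroup.subset_closure (Set.mem_union_right _ rfl)
    refine ⟨⟨h ^ m.toAdd, zpow_mem hhK _⟩, ?_⟩
    simp only [MonoidHom.comp_apply, Subgroup.coe_subtype, map_zpow, hh]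
    rw [← ofAdd_zsmul]
    simp
end

section
/- For every natural number n ≥ 1 there exists a subgroup G of the symmetric group of a set with 2^n + 3 elements such that G is isomorphic to the direct product (ℤ/2ℤ)^n × S₃ (in particular G is non-abelian), and for all σ, τ ∈ G the commutator σ⁻¹τ⁻¹στ moves at most 3 points of the set; equivalently, its normalized Hamming distance from the identity is at most 3/(2^n + 3). (Consequently the metric ultraproduct of these non-abelian groups with respect to the Hamming metrics is abelian.) -/
open Equiv Equiv.Perm

/-- `permCongr` as a `MulEquiv`. -/
def permCongrMul {α β : Type*} (e : α ≃ β) : Perm α ≃* Perm β :=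
  { e.permCongr with
    map_mul' := fun f g => by
      ext x
      simp [Equiv.permCongr_apply, Equiv.Perm.mul_apply] }

@[simp] lemma permCongrMul_apply {α β : Type*} (e : α ≃ β) (f : Perm α) (x : β) :
    permCongrMul e f x = e (f (e.symm x)) := rfl

lemma support_permCongrMul {α β : Type*} [DecidableEq α] [Fintype α] [DecidableEq β] [Fintype β]
    (e : α ≃ β) (f : Perm α) :
    (permCongrMul e f).support = f.support.map e.toEmbedding := by
  ext x
  simp only [Equiv.Perm.mem_support, Finset.mem_map, Equiv.coe_toEmbedding]
  constructor
  · intro h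
    refine ⟨e.symm x, fun hc => h ?_, by simp⟩
    rw [permCongrMul_apply, hc]; simp
  · rintro ⟨a, ha, rfl⟩
    intro hc
    apply ha
    rw [permCongrMul_apply] at hc
    have := congrArg e.symm hc
    simpa using this

lemma support_sumCongrHom_one {α β : Type*} [DecidableEq α] [Fintype α] [DecidableEq β]
    [Fintype β] (c : Perm β) :
    (Equiv.Perm.sumCongrHom α β (1, c)).support ⊆
      Finset.univ.map ⟨Sum.inr, Sum.inr_injective⟩ := by
  intro x hx
  rcases x with a | b
  · simp [Equiv.Perm.mem_support, Equiv.Perm.sumCongrHom] at hx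
  · simp

/-- For every `n ≥ 1` there is a subgroup `G` of the symmetric group on
`2^n + 3` points isomorphic to `(ℤ/2ℤ)^n × S₃` (hence non-abelian) such that
every commutator of elements of `G` moves at most `3` points; equivalently its
normalized Hamming distance from the identity is at most `3 / (2^n + 3)`. -/
theorem exists_nonabelian_subgroup_with_small_commutators (n : ℕ) (hn : 1 ≤ n) :
    ∃ G : Subgroup (Equiv.Perm (Fin (2 ^ n + 3))),
      Nonempty (G ≃* (Fin n → Multiplicative (ZMod 2)) × Equiv.Perm (Fin 3)) ∧
      ∀ σ τ : Equiv.Perm (Fin (2 ^ n + 3)), σ ∈ G → τ ∈ G →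
        (σ⁻¹ * τ⁻¹ * σ * τ).support.card ≤ 3 := by
  set A := Fin n → Multiplicative (ZMod 2) with hA
  have hcard : Fintype.card A = 2 ^ n := by
    simp [hA, Fintype.card_fun]
  have eA : A ≃ Fin (2 ^ n) := Fintype.equivFinOfCardEq hcard
  let e : (A ⊕ Fin 3) ≃ Fin (2 ^ n + 3) :=
    (Equiv.sumCongr eA (Equiv.refl (Fin 3))).trans finSumFinEquiv
  let ψ : A × Perm (Fin 3) →* Perm (A ⊕ Fin 3) :=
    (Equiv.Perm.sumCongrHom A (Fin 3)).comp
      (MonoidHom.prodMap (MulAction.toPermHom A A) (MonoidHom.id (Perm (Fin 3))))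
  let φ : A × Perm (Fin 3) →* Perm (Fin (2 ^ n + 3)) :=
    (permCongrMul e).toMonoidHom.comp ψ
  have hφ_eq : ∀ p, φ p = permCongrMul e
      (Equiv.Perm.sumCongrHom A (Fin 3) (MulAction.toPermHom A A p.1, p.2)) := fun p => rfl
  have hinj : Function.Injective φ := by
    intro p q hpq
    rw [hφ_eq, hφ_eq] at hpq
    have h1 := (permCongrMul e).injective hpq
    have h2 := Equiv.Perm.sumCongrHom_injective h1
    have hfst : MulAction.toPermHom A A p.1 = MulAction.toPermHom A A q.1 :=
      (Prod.ext_iff.mp h2).1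
    have hsnd : p.2 = q.2 := (Prod.ext_iff.mp h2).2
    have hp1 : p.1 = q.1 := by
      have := congrFun (congrArg (fun (f : Perm A) => (f : A → A)) hfst) 1
      simpa [MulAction.toPermHom_apply] using this
    exact Prod.ext hp1 hsnd
  refine ⟨φ.range, ⟨(MonoidHom.ofInjective hinj).symm⟩, ?_⟩
  rintro σ τ ⟨p, rfl⟩ ⟨q, rfl⟩
  have key : (φ p)⁻¹ * (φ q)⁻¹ * φ p * φ q = φ (1, p.2⁻¹ * q.2⁻¹ * p.2 * q.2) := by
    rw [← map_inv, ← map_inv, ← map_mul, ← map_mul, ← map_mul]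
    congr 1
    obtain ⟨a, s⟩ := p
    obtain ⟨b, t⟩ := q
    simp [Prod.ext_iff, mul_comm, mul_assoc, mul_left_comm]
  rw [key, hφ_eq]
  simp only [map_one]
  rw [support_permCongrMul, Finset.card_map]
  calc (Equiv.Perm.sumCongrHom A (Fin 3) (1, p.2⁻¹ * q.2⁻¹ * p.2 * q.2)).support.card
      ≤ (Finset.univ.map ⟨Sum.inr, Sum.inr_injective⟩ : Finset (A ⊕ Fin 3)).card :=
        Finset.card_le_card (support_sumCongrHom_one _)
    _ = 3 := by simp
end

section
/- Let G be a topological group and let (K_n)_{n≥1} be an increasing sequence of subsets of G with G = ⋃_{n≥1} K_n. Assume that for every n ≥ 1 and every rational q with 0 < q < 1 there exists a strongly continuous unitary representation of G on a separable complex Hilbert space which has a (K_n, q)-almost invariant unit vector but no nonzero invariant vector. Then there exists a single strongly continuous unitary representation of G on a separable complex Hilbert space which has no nonzero invariant vector and which, for every n ≥ 1 and every rational q with 0 < q < 1, has a (K_n, q)-almost invariant unit vector. -/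
/-- A strongly continuous unitary representation of a topological group `G` on a
separable complex Hilbert space. -/
structure StrongUnitaryRep (G : Type*) [Group G] [TopologicalSpace G] where
  /-- the underlying Hilbert space -/
  E : Type
  [normedAddCommGroup : NormedAddCommGroup E]
  [innerProductSpace : InnerProductSpace ℂ E]
  [completeSpace : CompleteSpace E]
  [separableSpace : TopologicalSpace.SeparableSpace E]
  /-- the unitary representation -/
  π : G →* (E ≃ₗᵢ[ℂ] E)
  strongly_continuous : ∀ v : E, Continuous fun g : G => π g v

attribute [instance] StrongUnitaryRep.normedAddCommGroup
  StrongUnitaryRep.innerProductSpace StrongUnitaryRep.completeSpace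
  StrongUnitaryRep.separableSpace

/-- A vector is invariant under a representation if it is fixed by every group
element. -/
def StrongUnitaryRep.Invariant {G : Type*} [Group G] [TopologicalSpace G]
    (ρ : StrongUnitaryRep G) (v : ρ.E) : Prop :=
  ∀ g : G, ρ.π g v = v

/-- A `(Q, ε)`-almost invariant unit vector: a unit vector moved by less than
`ε` by every element of `Q`. -/
def StrongUnitaryRep.AlmostInvariantUnitVector {G : Type*} [Group G]
    [TopologicalSpace G] (ρ : StrongUnitaryRep G) (Q : Set G) (ε : ℝ)
    (v : ρ.E) : Prop :=
  ‖v‖ = 1 ∧ ∀ g ∈ Q, ‖ρ.π g v - v‖ < ε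

/-! Take the Hilbert direct sum of the given representations, one for each pair `(n, q)`; the
index set is countable, so the sum is again separable. An invariant vector of the sum has
invariant components, hence vanishes, while the almost invariant unit vector of the `(n, q)`-th
summand stays almost invariant in the sum. Strong continuity of the sum holds on the dense span
of the summands, and passes to all vectors because the operators are isometries. -/

open scoped ENNReal
open Set TopologicalSpace Filter Topology

section OrbitContinuity

variable {X 𝕜 E : Type*} [TopologicalSpace X] [Semiring 𝕜] [SeminormedAddCommGroup E]
  [Module 𝕜 E] [ContinuousConstSMul 𝕜 E]

/-- The vectors with continuous orbit form a submodule, which is closed because the isometries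
`π x` are equicontinuous. -/
theorem continuous_apply_of_dense_span (π : X → E ≃ₗᵢ[𝕜] E) {s : Set E}
    (hs : Dense (Submodule.span 𝕜 s : Set E)) (h : ∀ v ∈ s, Continuous fun x => π x v)
    (v : E) : Continuous fun x => π x v := by
  let S : Submodule 𝕜 E :=
    { carrier := {v | Continuous fun x => π x v}
      add_mem' := fun ha hb => by simp only [mem_ofPred_eq, map_add]; exact ha.add hb
      zero_mem' := by simp only [mem_ofPred_eq, map_zero]; exact continuous_const
      smul_mem' := fun c v hv => by simp only [mem_ofPred_eq, map_smul]; exact hv.const_smul c }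
  have hequi : Equicontinuous fun x => ⇑(π x) :=
    (LipschitzWith.uniformEquicontinuous _ 1 fun x => (π x).lipschitz).equicontinuous
  have hclosed : IsClosed (S : Set E) := by
    change IsClosed {v | Continuous fun x => π x v}
    simp only [continuous_iff_continuousAt, ContinuousAt, ofPred_forall]
    exact isClosed_iInter fun x₀ => hequi.isClosed_setOfPred_tendsto (π x₀).continuous
  have hspan : closure (Submodule.span 𝕜 s : Set E) ⊆ S :=
    closure_minimal (Submodule.span_le.2 h) hclosed
  exact hspan (hs.closure_eq ▸ mem_univ v)

end OrbitContinuity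

namespace lp

variable {ι : Type*} {E F : ι → Type*} [∀ i, NormedAddCommGroup (E i)]
  [∀ i, NormedAddCommGroup (F i)] {p : ℝ≥0∞}
  {𝕜 : Type*} [NormedField 𝕜] [∀ i, NormedSpace 𝕜 (E i)] [∀ i, NormedSpace 𝕜 (F i)]

theorem memℓp_apply_linearIsometryEquiv (f : ∀ i, E i ≃ₗᵢ[𝕜] F i) (x : lp E p) :
    Memℓp (fun i => f i (x i)) p :=
  Memℓp.of_norm <| by simpa only [LinearIsometryEquiv.norm_map] using (lp.memℓp x).norm

variable [Fact (1 ≤ p)]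

theorem norm_eq_of_forall_norm_eq {f : lp E p} {g : lp F p} (h : ∀ i, ‖f i‖ = ‖g i‖) :
    ‖f‖ = ‖g‖ := by
  rcases p.trichotomy with rfl | rfl | hp
  · exact absurd (Fact.out : (1 : ℝ≥0∞) ≤ 0) (by norm_num)
  · simp only [norm_eq_ciSup, h]
  · simp only [norm_eq_tsum_rpow hp, h]

theorem dense_span_range_single [DecidableEq ι] (R : Type*) [Semiring R] [Module R (lp E p)]
    (hp : p ≠ ⊤) :
    Dense (Submodule.span R (⋃ i, range (lp.single p i : E i → lp E p)) : Set (lp E p)) :=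
  fun f => mem_closure_of_tendsto (lp.hasSum_single hp f) <| Eventually.of_forall fun _ =>
    Submodule.sum_mem _ fun i _ => Submodule.subset_span (mem_iUnion.2 ⟨i, mem_range_self _⟩)

theorem separableSpace [Countable ι] [∀ i, SeparableSpace (E i)] (hp : p ≠ ⊤) :
    SeparableSpace (lp E p) := by
  classical
  have hsingles : IsSeparable (⋃ i, range (lp.single p i : E i → lp E p)) :=
    .iUnion fun i => isSeparable_range (isometry_single i).continuous
  rw [← isSeparable_univ_iff, ← (dense_span_range_single ℤ hp).closure_eq]
  exact (hsingles.span (R := ℤ)).closure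

variable (p) in
def congrRight (f : ∀ i, E i ≃ₗᵢ[𝕜] F i) : lp E p ≃ₗᵢ[𝕜] lp F p where
  toFun x := ⟨fun i => f i (x i), memℓp_apply_linearIsometryEquiv f x⟩
  invFun y :=
    ⟨fun i => (f i).symm (y i), memℓp_apply_linearIsometryEquiv (fun i => (f i).symm) y⟩
  map_add' x y := lp.ext <| funext fun i => (f i).map_add (x i) (y i)
  map_smul' c x := lp.ext <| funext fun i => (f i).map_smul c (x i)
  left_inv x := lp.ext <| funext fun i => (f i).symm_apply_apply (x i)
  right_inv y := lp.ext <| funext fun i => (f i).apply_symm_apply (y i)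
  norm_map' x := norm_eq_of_forall_norm_eq fun i => (f i).norm_map (x i)

@[simp]
theorem congrRight_apply (f : ∀ i, E i ≃ₗᵢ[𝕜] F i) (x : lp E p) (i : ι) :
    congrRight p f x i = f i (x i) :=
  rfl

theorem congrRight_single [DecidableEq ι] (f : ∀ i, E i ≃ₗᵢ[𝕜] F i) (i : ι) (a : E i) :
    congrRight p f (lp.single p i a) = lp.single p i (f i a) := by
  ext j
  obtain rfl | hji := eq_or_ne j i
  · simp only [congrRight_apply, lp.single_apply_self]
  · simp only [congrRight_apply, lp.single_apply_ne p i _ hji, map_zero]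

variable {G : Type*} [Monoid G]

variable (p) in
def diagonalRep (π : ∀ i, G →* (E i ≃ₗᵢ[𝕜] E i)) : G →* (lp E p ≃ₗᵢ[𝕜] lp E p) where
  toFun g := congrRight p fun i => π i g
  map_one' := LinearIsometryEquiv.ext fun x => lp.ext <| funext fun i => by simp
  map_mul' g h := LinearIsometryEquiv.ext fun x => lp.ext <| funext fun i => by
    simp [LinearIsometryEquiv.coe_mul]

@[simp]
theorem diagonalRep_apply (π : ∀ i, G →* (E i ≃ₗᵢ[𝕜] E i)) (g : G) (x : lp E p) (i : ι) :
    diagonalRep p π g x i = π i g (x i) :=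
  rfl

theorem diagonalRep_single [DecidableEq ι] (π : ∀ i, G →* (E i ≃ₗᵢ[𝕜] E i)) (g : G) (i : ι)
    (a : E i) : diagonalRep p π g (lp.single p i a) = lp.single p i (π i g a) :=
  congrRight_single _ i a

theorem eq_zero_of_forall_diagonalRep_eq {π : ∀ i, G →* (E i ≃ₗᵢ[𝕜] E i)}
    (h : ∀ i (a : E i), (∀ g, π i g a = a) → a = 0) {x : lp E p}
    (hx : ∀ g, diagonalRep p π g x = x) : x = 0 :=
  lp.ext <| funext fun i => h i (x i) fun g => by rw [← diagonalRep_apply, hx g]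

theorem norm_diagonalRep_single_sub [DecidableEq ι] (hp : p ≠ 0)
    (π : ∀ i, G →* (E i ≃ₗᵢ[𝕜] E i)) (g : G) (i : ι) (a : E i) :
    ‖diagonalRep p π g (lp.single p i a) - lp.single p i a‖ = ‖π i g a - a‖ := by
  rw [diagonalRep_single, ← lp.single_sub, lp.norm_single (pos_iff_ne_zero.2 hp)]

theorem continuous_diagonalRep_apply [TopologicalSpace G] (hp : p ≠ ⊤)
    (π : ∀ i, G →* (E i ≃ₗᵢ[𝕜] E i)) (hπ : ∀ i (v : E i), Continuous fun g => π i g v)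
    (v : lp E p) : Continuous fun g => diagonalRep p π g v := by
  classical
  refine continuous_apply_of_dense_span (diagonalRep p π ·) (dense_span_range_single 𝕜 hp) ?_ v
  intro w hw
  obtain ⟨i, a, rfl⟩ := mem_iUnion.1 hw
  simp only [diagonalRep_single]
  exact (isometry_single i).continuous.comp (hπ i a)

end lp

namespace StrongUnitaryRep

variable {G : Type*} [Group G] [TopologicalSpace G] {ι : Type} [Countable ι]

noncomputable def directSum (ρ : ι → StrongUnitaryRep G) : StrongUnitaryRep G where
  E := lp (fun i => (ρ i).E) 2
  separableSpace := lp.separableSpace ENNReal.ofNat_ne_top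
  π := lp.diagonalRep 2 fun i => (ρ i).π
  strongly_continuous :=
    lp.continuous_diagonalRep_apply ENNReal.ofNat_ne_top _ fun i => (ρ i).strongly_continuous

theorem eq_zero_of_invariant_directSum {ρ : ι → StrongUnitaryRep G}
    (h : ∀ i (v : (ρ i).E), (ρ i).Invariant v → v = 0) {v : (directSum ρ).E}
    (hv : (directSum ρ).Invariant v) : v = 0 :=
  lp.eq_zero_of_forall_diagonalRep_eq h hv

theorem AlmostInvariantUnitVector.directSum_single [DecidableEq ι] {ρ : ι → StrongUnitaryRep G}
    {i : ι} {Q : Set G} {ε : ℝ} {v : (ρ i).E} (hv : (ρ i).AlmostInvariantUnitVector Q ε v) :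
    (directSum ρ).AlmostInvariantUnitVector Q ε (lp.single 2 i v) :=
  ⟨(lp.norm_single (E := fun i => (ρ i).E) two_pos i v).trans hv.1, fun g hg =>
    (lp.norm_diagonalRep_single_sub (E := fun i => (ρ i).E) two_ne_zero _ g i v).trans_lt
      (hv.2 g hg)⟩

end StrongUnitaryRep

theorem exists_single_rep_with_almost_invariant_vectors_general
    {G : Type*} [Group G] [TopologicalSpace G]
    (K : ℕ → Set G)
    (h : ∀ n : ℕ, 1 ≤ n → ∀ q : ℚ, 0 < q → q < 1 →
      ∃ ρ : StrongUnitaryRep G,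
        (∃ v : ρ.E, ρ.AlmostInvariantUnitVector (K n) (q : ℝ) v) ∧
        (∀ v : ρ.E, ρ.Invariant v → v = 0)) :
    ∃ ρ : StrongUnitaryRep G,
      (∀ v : ρ.E, ρ.Invariant v → v = 0) ∧
      ∀ n : ℕ, 1 ≤ n → ∀ q : ℚ, 0 < q → q < 1 →
        ∃ v : ρ.E, ρ.AlmostInvariantUnitVector (K n) (q : ℝ) v := by
  choose ρ hexists hinv using fun i : {p : ℕ × ℚ // 1 ≤ p.1 ∧ 0 < p.2 ∧ p.2 < 1} =>
    h i.1.1 i.2.1 i.1.2 i.2.2.1 i.2.2.2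
  choose v hv using hexists
  refine ⟨StrongUnitaryRep.directSum ρ,
    fun _ => StrongUnitaryRep.eq_zero_of_invariant_directSum hinv, ?_⟩
  intro n hn q hq hq1
  exact ⟨_, (hv ⟨(n, q), hn, hq, hq1⟩).directSum_single⟩

/-- If for every `n ≥ 1` and every rational `0 < q < 1` there is a strongly
continuous unitary representation of `G` on a separable complex Hilbert space
with a `(K_n, q)`-almost invariant unit vector but no nonzero invariant vector,
then there is a single such representation without nonzero invariant vectors
having `(K_n, q)`-almost invariant unit vectors for all `n ≥ 1` and all
rational `0 < q < 1`. -/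
theorem exists_single_rep_with_almost_invariant_vectors
    {G : Type*} [Group G] [TopologicalSpace G] [IsTopologicalGroup G]
    (K : ℕ → Set G) (hK : Monotone K) (hcover : (⋃ n, K n) = Set.univ)
    (h : ∀ n : ℕ, 1 ≤ n → ∀ q : ℚ, 0 < q → q < 1 →
      ∃ ρ : StrongUnitaryRep G,
        (∃ v : ρ.E, ρ.AlmostInvariantUnitVector (K n) (q : ℝ) v) ∧
        (∀ v : ρ.E, ρ.Invariant v → v = 0)) :
    ∃ ρ : StrongUnitaryRep G,
      (∀ v : ρ.E, ρ.Invariant v → v = 0) ∧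
      ∀ n : ℕ, 1 ≤ n → ∀ q : ℚ, 0 < q → q < 1 →
        ∃ v : ρ.E, ρ.AlmostInvariantUnitVector (K n) (q : ℝ) v :=
  exists_single_rep_with_almost_invariant_vectors_general K h
end
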